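/- For all φ, ψ ∈ Aut(F_n) and all v ∈ H: τ₁(φ ψ)(v) = τ₁(φ)(v) + (|φ| ⊗ |φ|)(τ₁(ψ)(|φ|⁻¹(v))). In other words, τ₁ is a 1-cocycle on Aut(F_n) with values in the additive group of additive maps H → H ⊗_ℤ H, for the action φ · u := (|φ| ⊗ |φ|) ∘ u ∘ |φ|⁻¹. -/

import Mathlib

noncomputable section
open scoped TensorProduct


/-- `H = Fin n →₀ ℤ`, the first integral homology of the free group. -/
abbrev Hz (n : ℕ) : Type := Fin n →₀ ℤ

/-- The standard basis vector `X i`. -/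
def Xz (n : ℕ) (i : Fin n) : Hz n := Finsupp.single i 1

/-- `H ⊗ℤ H`. -/
abbrev HHz (n : ℕ) : Type := Hz n ⊗[ℤ] Hz n

/-- The degree ≤ 2 truncation of the Magnus algebra: underlying set `H × (H ⊗ H)`,
with multiplication `(u,s)·(u',s') = (u+u', s+s'+u⊗u')`. -/
def Mn (n : ℕ) : Type := Hz n × HHz n

namespace Mn

variable {n : ℕ}

instance : Group (Mn n) where
  mul a b := (a.1 + b.1, a.2 + b.2 + a.1 ⊗ₜ[ℤ] b.1)
  one := ((0 : Hz n), (0 : HHz n))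
  inv a := (-a.1, -a.2 + a.1 ⊗ₜ[ℤ] a.1)
  mul_assoc a b c := by
    show (_, _) = (_, _)
    refine Prod.ext (add_assoc _ _ _) ?_
    show a.2 + b.2 + a.1 ⊗ₜ[ℤ] b.1 + c.2 + (a.1 + b.1) ⊗ₜ[ℤ] c.1
        = a.2 + (b.2 + c.2 + b.1 ⊗ₜ[ℤ] c.1) + a.1 ⊗ₜ[ℤ] (b.1 + c.1)
    rw [TensorProduct.add_tmul, TensorProduct.tmul_add]
    abel
  one_mul a := by
    show ((0 : Hz n) + a.1, (0 : HHz n) + a.2 + (0 : Hz n) ⊗ₜ[ℤ] a.1) = a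
    rw [TensorProduct.zero_tmul]
    simp
    exact rfl
  mul_one a := by
    show (a.1 + 0, a.2 + (0:HHz n) + a.1 ⊗ₜ[ℤ] (0 : Hz n)) = a
    rw [TensorProduct.tmul_zero]
    simp
    exact rfl
  inv_mul_cancel a := by
    show (-a.1 + a.1, (-a.2 + a.1 ⊗ₜ[ℤ] a.1) + a.2 + (-a.1) ⊗ₜ[ℤ] a.1) = ((0:Hz n), (0:HHz n))
    rw [TensorProduct.neg_tmul]
    refine Prod.ext (by simp) ?_
    show _ = (0 : HHz n)
    abel

end Mn

/-- The truncated standard Magnus expansion `Θ : F_n →* M_n`, `x_i ↦ (X_i, 0)`. -/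
def Theta (n : ℕ) : FreeGroup (Fin n) →* Mn n :=
  FreeGroup.lift fun i => ((Xz n i, 0) : Mn n)

/-- The abelianization map `a : F_n → H`, the first component of `Θ`. -/
def aMap (n : ℕ) (γ : FreeGroup (Fin n)) : Hz n := (Theta n γ).1

/-- `θ₂`, the second component of the truncated Magnus expansion. -/
def theta2 (n : ℕ) (γ : FreeGroup (Fin n)) : HHz n := (Theta n γ).2

/-!
The map `φ ↦ τ₁(φ)` is the twisted coboundary `φ ↦ θ₂ - φ · θ₂` of the function `θ₂`, read
through the abelianization, and any such coboundary is a crossed homomorphism. The remaining input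
is that `a` is surjective, so that `|·|` is multiplicative and `τ₁(φ)` is determined by its
values on `a(γ)`.
-/

section TwistedCoboundary

variable {G X B : Type*} [Group G] [MulAction G X] [AddCommGroup B]

def twistedCoboundary (T : G → B →+ B) (θ : X → B) (g : G) (x : X) : B :=
  θ x - T g (θ (g⁻¹ • x))

theorem twistedCoboundary_mul (T : G → B →+ B) (hT : ∀ g h b, T (g * h) b = T g (T h b))
    (θ : X → B) (g h : G) (x : X) :
    twistedCoboundary T θ (g * h) x =
      twistedCoboundary T θ g x + T g (twistedCoboundary T θ h (g⁻¹ • x)) := by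
  simp only [twistedCoboundary, hT, mul_inv_rev, mul_smul, map_sub]
  exact (sub_add_sub_cancel _ _ _).symm

end TwistedCoboundary

section Abelianization

variable {n : ℕ}

def aHom (n : ℕ) : FreeGroup (Fin n) →* Multiplicative (Hz n) :=
  (MonoidHom.mk' (fun m : Mn n => Multiplicative.ofAdd m.1) fun _ _ => rfl).comp (Theta n)

theorem aMap_eq_toAdd_aHom (γ : FreeGroup (Fin n)) :
    aMap n γ = Multiplicative.toAdd (aHom n γ) := rfl

theorem aMap_mul (γ δ : FreeGroup (Fin n)) : aMap n (γ * δ) = aMap n γ + aMap n δ := by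
  simp only [aMap_eq_toAdd_aHom, map_mul, toAdd_mul]

theorem aMap_zpow (γ : FreeGroup (Fin n)) (b : ℤ) : aMap n (γ ^ b) = b • aMap n γ := by
  simp only [aMap_eq_toAdd_aHom, map_zpow, toAdd_zpow]

theorem aMap_of (i : Fin n) : aMap n (FreeGroup.of i) = Xz n i := by
  have hΘ : Theta n (FreeGroup.of i) = ((Xz n i, 0) : Mn n) := FreeGroup.lift_apply_of
  rw [aMap, hΘ]

theorem aMap_surjective (n : ℕ) : Function.Surjective (aMap n) := by
  intro v
  induction v using Finsupp.induction_linear with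
  | zero => exact ⟨1, by simpa only [zpow_zero, zero_smul] using aMap_zpow 1 0⟩
  | add v w hv hw =>
    obtain ⟨γ, rfl⟩ := hv
    obtain ⟨δ, rfl⟩ := hw
    exact ⟨γ * δ, aMap_mul γ δ⟩
  | single i b =>
    refine ⟨FreeGroup.of i ^ b, ?_⟩
    rw [aMap_zpow, aMap_of, Xz, Finsupp.smul_single, smul_eq_mul, mul_one]

theorem induced_mul_apply (Φ : MulAut (FreeGroup (Fin n)) → (Hz n →+ Hz n))
    (hΦ : ∀ φ γ, Φ φ (aMap n γ) = aMap n (φ γ)) (φ ψ : MulAut (FreeGroup (Fin n))) (v : Hz n) :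
    Φ (φ * ψ) v = Φ φ (Φ ψ v) := by
  obtain ⟨γ, rfl⟩ := aMap_surjective n v
  rw [hΦ, hΦ, hΦ, MulAut.mul_apply]

end Abelianization

theorem stmt13_general (n : ℕ)
    (Φ : MulAut (FreeGroup (Fin n)) → (Hz n →+ Hz n))
    (hΦ : ∀ (φ : MulAut (FreeGroup (Fin n))) (γ : FreeGroup (Fin n)),
      Φ φ (aMap n γ) = aMap n (φ γ))
    (τ : MulAut (FreeGroup (Fin n)) → (Hz n →+ HHz n))
    (hτ : ∀ (φ : MulAut (FreeGroup (Fin n))) (γ : FreeGroup (Fin n)),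
      τ φ (aMap n γ) = theta2 n γ -
        (TensorProduct.map (Φ φ).toIntLinearMap (Φ φ).toIntLinearMap)
          (theta2 n (φ⁻¹ γ)))
 :
    ∀ (φ ψ : MulAut (FreeGroup (Fin n))) (v : Hz n),
      τ (φ * ψ) v = τ φ v +
        (TensorProduct.map (Φ φ).toIntLinearMap (Φ φ).toIntLinearMap)
          (τ ψ (Φ φ⁻¹ v)) := by
  intro φ ψ v
  obtain ⟨γ, rfl⟩ := aMap_surjective n v
  let T : MulAut (FreeGroup (Fin n)) → HHz n →+ HHz n := fun φ =>
    (TensorProduct.map (Φ φ).toIntLinearMap (Φ φ).toIntLinearMap).toAddMonoidHom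
  have hT : ∀ φ ψ t, T (φ * ψ) t = T φ (T ψ t) := fun φ ψ t => by
    have hcomp : (Φ (φ * ψ)).toIntLinearMap = (Φ φ).toIntLinearMap ∘ₗ (Φ ψ).toIntLinearMap :=
      LinearMap.ext (induced_mul_apply Φ hΦ φ ψ)
    simp only [T, hcomp, TensorProduct.map_comp, LinearMap.toAddMonoidHom_coe,
      LinearMap.comp_apply]
  have hτ' : ∀ φ γ, τ φ (aMap n γ) = twistedCoboundary T (theta2 n) φ γ := hτ
  rw [hΦ, hτ', hτ', hτ']
  exact twistedCoboundary_mul T hT (theta2 n) φ ψ γ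

theorem stmt13 (n : ℕ) (hn : 2 ≤ n)
    (Φ : MulAut (FreeGroup (Fin n)) → (Hz n →+ Hz n))
    (hΦ : ∀ (φ : MulAut (FreeGroup (Fin n))) (γ : FreeGroup (Fin n)),
      Φ φ (aMap n γ) = aMap n (φ γ))
    (τ : MulAut (FreeGroup (Fin n)) → (Hz n →+ HHz n))
    (hτ : ∀ (φ : MulAut (FreeGroup (Fin n))) (γ : FreeGroup (Fin n)),
      τ φ (aMap n γ) = theta2 n γ -
        (TensorProduct.map (Φ φ).toIntLinearMap (Φ φ).toIntLinearMap)
          (theta2 n (φ⁻¹ γ)))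
 :
    ∀ (φ ψ : MulAut (FreeGroup (Fin n))) (v : Hz n),
      τ (φ * ψ) v = τ φ v +
        (TensorProduct.map (Φ φ).toIntLinearMap (Φ φ).toIntLinearMap)
          (τ ψ (Φ φ⁻¹ v)) :=
  stmt13_general n Φ hΦ τ hτ
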